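/- arXiv:math/0702056 — 2 statements merged into one kernel-verified Lean document; each statement's English description precedes it below -/
import Mathlib

section
/- Let U ⊆ ℝⁿ be open, let f : ℝⁿ → ℝ be continuous on U, let M ⊆ U be a measurable set whose closure is compact and contained in U, and let φ : ℝⁿ → ℂ be continuous with compact support contained in U. Define F(z) = ∫_M (f(x))^z φ(x) dx for Re z > 0. Then F is holomorphic on the half-plane {z ∈ ℂ : Re z > 0}, and for every z in this half-plane its derivative is F′(z) = ∫_M Log(f(x))·(f(x))^z·φ(x) dx, where the integrand is taken to be 0 at points where f(x) = 0. -/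
open MeasureTheory Complex

set_option maxHeartbeats 1000000

private lemma aux_cpow_bound (C b m : ℝ) (hC : 1 ≤ C) (t : ℝ) (ht : |t| ≤ C)
    (z : ℂ) (hz0 : 0 < z.re) (hzb : z.re ≤ b) (him : |z.im| ≤ m) :
    ‖(t : ℂ) ^ z‖ ≤ Real.exp (Real.pi * m) * C ^ b := by
  have hm : 0 ≤ m := (abs_nonneg _).trans him
  have hCb : (1:ℝ) ≤ C ^ b := Real.one_le_rpow hC (hz0.le.trans hzb)
  rcases eq_or_ne t 0 with rfl | htne
  · rw [Complex.ofReal_zero, Complex.zero_cpow (fun h => by simp [h] at hz0)]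
    simp only [norm_zero]
    positivity
  · have h1 : ‖(t : ℂ) ^ z‖ = |t| ^ z.re / Real.exp ((t:ℂ).arg * z.im) := by
      rw [Complex.norm_cpow_of_ne_zero (Complex.ofReal_ne_zero.mpr htne),
        Complex.norm_real, Real.norm_eq_abs]
    rw [h1, div_le_iff₀ (Real.exp_pos _)]
    have h2 : |t| ^ z.re ≤ C ^ b :=
      (Real.rpow_le_rpow (abs_nonneg t) ht hz0.le).trans
        (Real.rpow_le_rpow_of_exponent_le hC hzb)
    calc |t| ^ z.re ≤ C ^ b * 1 := by simpa using h2
      _ ≤ C ^ b * Real.exp (Real.pi * m + (t:ℂ).arg * z.im) := by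
          refine mul_le_mul_of_nonneg_left (Real.one_le_exp ?_) (by positivity)
          have := (abs_mul ((t:ℂ).arg) z.im) ▸ (neg_abs_le ((t:ℂ).arg * z.im))
          nlinarith [Complex.abs_arg_le_pi (t:ℂ), abs_nonneg z.im, abs_nonneg ((t:ℂ).arg),
            mul_le_mul (Complex.abs_arg_le_pi (t:ℂ)) him (abs_nonneg _) Real.pi_pos.le]
      _ = Real.exp (Real.pi * m) * C ^ b * Real.exp ((t:ℂ).arg * z.im) := by
          rw [Real.exp_add]; ring

private lemma aux_log_cpow_bound (C b m a : ℝ) (hC : 1 ≤ C) (ha : 0 < a) (t : ℝ) (ht : |t| ≤ C)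
    (z : ℂ) (haz : a ≤ z.re) (hzb : z.re ≤ b) (him : |z.im| ≤ m) :
    ‖Complex.log t * (t : ℂ) ^ z‖ ≤
      Real.exp (Real.pi * m) * (2 / a + Real.pi + C ^ b * (Real.log C + Real.pi)) := by
  have hz0 : 0 < z.re := ha.trans_le haz
  have hm : 0 ≤ m := (abs_nonneg _).trans him
  have hb : 0 < b := hz0.trans_le hzb
  have hlogC : 0 ≤ Real.log C := Real.log_nonneg hC
  rcases eq_or_ne t 0 with rfl | htne
  · rw [Complex.ofReal_zero, Complex.zero_cpow (fun h => by simp [h] at hz0), mul_zero]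
    simp only [norm_zero]
    positivity
  have hs : 0 < |t| := abs_pos.mpr htne
  -- norm of log
  have hlog : ‖Complex.log t‖ ≤ |Real.log (_root_.abs t)| + Real.pi := by
    refine (Complex.norm_le_abs_re_add_abs_im _).trans ?_
    rw [Complex.log_re, Complex.log_im, Complex.norm_real, Real.norm_eq_abs]
    exact add_le_add le_rfl (Complex.abs_arg_le_pi _)
  have hpow : ‖(t : ℂ) ^ z‖ ≤ |t| ^ z.re * Real.exp (Real.pi * m) := by
    have h1 : ‖(t : ℂ) ^ z‖ = |t| ^ z.re / Real.exp ((t:ℂ).arg * z.im) := by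
      rw [Complex.norm_cpow_of_ne_zero (Complex.ofReal_ne_zero.mpr htne),
        Complex.norm_real, Real.norm_eq_abs]
    rw [h1, div_le_iff₀ (Real.exp_pos _), mul_assoc, ← Real.exp_add]
    refine le_mul_of_one_le_right (Real.rpow_nonneg (abs_nonneg t) _) (Real.one_le_exp ?_)
    nlinarith [Complex.abs_arg_le_pi (t:ℂ), abs_nonneg z.im, abs_nonneg ((t:ℂ).arg),
      mul_le_mul (Complex.abs_arg_le_pi (t:ℂ)) him (abs_nonneg _) Real.pi_pos.le,
      (abs_mul ((t:ℂ).arg) z.im) ▸ (neg_abs_le ((t:ℂ).arg * z.im))]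

  have key : |t| ^ z.re * (|Real.log (_root_.abs t)| + Real.pi) ≤
      2 / a + Real.pi + C ^ b * (Real.log C + Real.pi) := by
    rcases le_or_gt |t| 1 with hle | hgt
    · have h1 : |Real.log (_root_.abs t)| = Real.log |t|⁻¹ := by
        rw [Real.log_inv, abs_of_nonpos (Real.log_nonpos (abs_nonneg t) hle)]
      have h2 : Real.log |t|⁻¹ ≤ (|t|⁻¹) ^ (a/2) / (a/2) :=
        Real.log_le_rpow_div (by positivity) (by positivity)
      have h3 : |t| ^ z.re ≤ |t| ^ a := Real.rpow_le_rpow_of_exponent_ge hs hle haz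
      have h4 : |t| ^ z.re * |Real.log (_root_.abs t)| ≤ 2 / a := by
        rw [h1]
        calc |t| ^ z.re * Real.log |t|⁻¹ ≤ |t| ^ a * ((|t|⁻¹) ^ (a/2) / (a/2)) := by
              refine mul_le_mul h3 h2 (Real.log_nonneg ((one_le_inv₀ hs).mpr hle)) (by positivity)
          _ = |t| ^ a * |t| ^ (-(a/2)) * (2 / a) := by
              rw [Real.inv_rpow (abs_nonneg t), ← Real.rpow_neg (abs_nonneg t)]
              field_simp
          _ = |t| ^ (a/2) * (2 / a) := by
              rw [← Real.rpow_add hs]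
              congr 1
              ring_nf
          _ ≤ 1 * (2 / a) := by
              refine mul_le_mul_of_nonneg_right ?_ (by positivity)
              exact Real.rpow_le_one (abs_nonneg t) hle (by positivity)
          _ = 2 / a := one_mul _
      have h5 : |t| ^ z.re * Real.pi ≤ Real.pi := by
        nth_rewrite 2 [← one_mul Real.pi]
        refine mul_le_mul_of_nonneg_right ?_ Real.pi_pos.le
        exact Real.rpow_le_one (abs_nonneg t) hle hz0.le
      have : 0 ≤ C ^ b * (Real.log C + Real.pi) := by positivity
      nlinarith
    · have h2 : |t| ^ z.re ≤ C ^ b :=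
        (Real.rpow_le_rpow (abs_nonneg t) ht hz0.le).trans
          (Real.rpow_le_rpow_of_exponent_le hC hzb)
      have h3 : |Real.log (_root_.abs t)| = Real.log |t| := abs_of_nonneg (Real.log_nonneg hgt.le)
      have h4 : Real.log |t| ≤ Real.log C := Real.log_le_log hs ht
      have h5 : 0 ≤ 2 / a := by positivity
      have h6 : |t| ^ z.re * (|Real.log (_root_.abs t)| + Real.pi) ≤ C ^ b * (Real.log C + Real.pi) := by
        rw [h3]
        refine mul_le_mul h2 (add_le_add h4 le_rfl)
          (add_nonneg (Real.log_nonneg hgt.le) Real.pi_pos.le) (by positivity)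
      nlinarith [Real.pi_pos]
  calc ‖Complex.log t * (t : ℂ) ^ z‖ = ‖Complex.log t‖ * ‖(t : ℂ) ^ z‖ := norm_mul _ _
    _ ≤ (|Real.log (_root_.abs t)| + Real.pi) * (|t| ^ z.re * Real.exp (Real.pi * m)) := by
        refine mul_le_mul hlog hpow (norm_nonneg _) (by positivity)
    _ = Real.exp (Real.pi * m) * (|t| ^ z.re * (|Real.log (_root_.abs t)| + Real.pi)) := by ring
    _ ≤ Real.exp (Real.pi * m) * (2 / a + Real.pi + C ^ b * (Real.log C + Real.pi)) := by
        exact mul_le_mul_of_nonneg_left key (Real.exp_pos _).le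

theorem holomorphic_on_halfplane_with_deriv
    (n : ℕ) (hn : 1 ≤ n) (U : Set (Fin n → ℝ)) (hU : IsOpen U)
    (f : (Fin n → ℝ) → ℝ) (hf : ContinuousOn f U)
    (M : Set (Fin n → ℝ)) (hMmeas : MeasurableSet M) (hMU : M ⊆ U)
    (hMc : IsCompact (closure M)) (hMcU : closure M ⊆ U)
    (φ : (Fin n → ℝ) → ℂ) (hφc : Continuous φ) (hφs : HasCompactSupport φ)
    (hφU : tsupport φ ⊆ U)
    (F : ℂ → ℂ)
    (hF : ∀ z : ℂ, 0 < z.re → F z = ∫ x in M, (f x : ℂ) ^ z * φ x) :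
    DifferentiableOn ℂ F {z : ℂ | 0 < z.re} ∧
      ∀ z : ℂ, 0 < z.re →
        HasDerivAt F (∫ x in M, Complex.log (f x) * (f x : ℂ) ^ z * φ x) z := by
  have hplane : IsOpen {z : ℂ | 0 < z.re} := isOpen_lt continuous_const Complex.continuous_re
  haveI : IsFiniteMeasure (volume.restrict M : Measure (Fin n → ℝ)) := by
    constructor
    rw [Measure.restrict_apply_univ]
    exact lt_of_le_of_lt (measure_mono subset_closure) hMc.measure_lt_top
  obtain ⟨C₀, hC₀⟩ := hMc.exists_bound_of_continuousOn (hf.mono hMcU)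
  set C : ℝ := max C₀ 1 with hCdef
  have hC1 : 1 ≤ C := le_max_right _ _
  have hCf : ∀ x ∈ M, |f x| ≤ C := fun x hx =>
    le_trans (hC₀ x (subset_closure hx)) (le_max_left _ _)
  obtain ⟨Cφ, hCφ⟩ := (hφc.norm.bounded_above_of_compact_support hφs.norm)
  have hCφ' : ∀ x, ‖φ x‖ ≤ Cφ := fun x => by simpa using hCφ x
  have hCφ0 : 0 ≤ Cφ := le_trans (norm_nonneg (φ (fun _ => 0))) (hCφ' _)
  have hfm : AEMeasurable f (volume.restrict M) := (hf.mono hMU).aemeasurable hMmeas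
  have hfc : AEMeasurable (fun x => (f x : ℂ)) (volume.restrict M) :=
    Complex.measurable_ofReal.comp_aemeasurable hfm
  have hmeas : ∀ z : ℂ, AEStronglyMeasurable (fun x => (f x : ℂ) ^ z * φ x)
      (volume.restrict M) := fun z =>
    ((hfc.pow aemeasurable_const).mul hφc.aemeasurable).aestronglyMeasurable
  have hmeas' : ∀ z : ℂ, AEStronglyMeasurable
      (fun x => Complex.log (f x) * (f x : ℂ) ^ z * φ x) (volume.restrict M) := fun z =>
    (((Complex.measurable_log.comp_aemeasurable hfc).mul
      (hfc.pow aemeasurable_const)).mul hφc.aemeasurable).aestronglyMeasurable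

  have key : ∀ z : ℂ, 0 < z.re →
      HasDerivAt F (∫ x in M, Complex.log (f x) * (f x : ℂ) ^ z * φ x) z := by
    intro z₀ hz₀
    have hε : 0 < z₀.re / 2 := by positivity
    have hball : ∀ z ∈ Metric.ball z₀ (z₀.re / 2),
        z₀.re / 2 ≤ z.re ∧ z.re ≤ z₀.re + z₀.re / 2 ∧ |z.im| ≤ |z₀.im| + z₀.re / 2 := by
      intro z hz
      rw [Metric.mem_ball, Complex.dist_eq] at hz
      have hre : |z.re - z₀.re| ≤ ‖z - z₀‖ := by
        simpa using Complex.abs_re_le_norm (z - z₀)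
      have him : |z.im - z₀.im| ≤ ‖z - z₀‖ := by
        simpa using Complex.abs_im_le_norm (z - z₀)
      have h1 := abs_le.mp (hre.trans hz.le)
      have h2 := abs_le.mp (him.trans hz.le)
      have h3 := neg_abs_le z₀.im
      have h4 := le_abs_self z₀.im
      refine ⟨by linarith [h1.1], by linarith [h1.2], ?_⟩
      rw [abs_le]
      exact ⟨by linarith [h2.1], by linarith [h2.2]⟩
    have hint : Integrable (fun x => (f x : ℂ) ^ z₀ * φ x) (volume.restrict M) := by
      refine (integrable_const (Real.exp (Real.pi * (|z₀.im| + z₀.re / 2)) *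
        C ^ (z₀.re + z₀.re / 2) * Cφ)).mono' (hmeas z₀) ?_
      filter_upwards [ae_restrict_mem hMmeas] with x hx
      rw [norm_mul]
      have h1 := aux_cpow_bound C (z₀.re + z₀.re / 2) (|z₀.im| + z₀.re / 2) hC1 (f x)
        (hCf x hx) z₀ hz₀ (by linarith) (le_add_of_nonneg_right hε.le)
      exact mul_le_mul h1 (hCφ' x) (norm_nonneg _) (by positivity)
    have hKnn : (0:ℝ) ≤ Real.exp (Real.pi * (|z₀.im| + z₀.re / 2)) *
        (2 / (z₀.re / 2) + Real.pi +
          C ^ (z₀.re + z₀.re / 2) * (Real.log C + Real.pi)) := by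
      refine mul_nonneg (Real.exp_pos _).le ?_
      have h1 : (0:ℝ) ≤ 2 / (z₀.re / 2) := div_nonneg (by norm_num) hε.le
      have h2 : (0:ℝ) ≤ C ^ (z₀.re + z₀.re / 2) := Real.rpow_nonneg (by linarith) _
      have h3 := Real.log_nonneg hC1
      nlinarith [Real.pi_pos]
    have hbd : ∀ᵐ x ∂(volume.restrict M), ∀ z ∈ Metric.ball z₀ (z₀.re / 2),
        ‖Complex.log (f x) * (f x : ℂ) ^ z * φ x‖ ≤
          Real.exp (Real.pi * (|z₀.im| + z₀.re / 2)) *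
            (2 / (z₀.re / 2) + Real.pi +
              C ^ (z₀.re + z₀.re / 2) * (Real.log C + Real.pi)) * Cφ := by
      filter_upwards [ae_restrict_mem hMmeas] with x hx z hz
      obtain ⟨hza, hzb, hzm⟩ := hball z hz
      rw [norm_mul]
      refine mul_le_mul ?_ (hCφ' x) (norm_nonneg _) hKnn
      exact aux_log_cpow_bound C (z₀.re + z₀.re / 2) (|z₀.im| + z₀.re / 2) (z₀.re / 2)
        hC1 hε (f x) (hCf x hx) z hza hzb hzm
    have hdiff : ∀ᵐ x ∂(volume.restrict M), ∀ z ∈ Metric.ball z₀ (z₀.re / 2),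
        HasDerivAt (fun z => (f x : ℂ) ^ z * φ x)
          (Complex.log (f x) * (f x : ℂ) ^ z * φ x) z := by
      filter_upwards [ae_restrict_mem hMmeas] with x hx z hz
      obtain ⟨hza, _, _⟩ := hball z hz
      have hzne : z ≠ 0 := by
        intro h
        rw [h] at hza
        simp only [Complex.zero_re] at hza
        linarith
      have h := ((hasStrictDerivAt_const_cpow (x := (f x : ℂ)) (y := z)
        (Or.inr hzne)).hasDerivAt).mul_const (φ x)
      rw [mul_comm (Complex.log _)]
      exact h
    have hG : HasDerivAt (fun z => ∫ x in M, (f x : ℂ) ^ z * φ x)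
        (∫ x in M, Complex.log (f x) * (f x : ℂ) ^ z₀ * φ x) z₀ :=
      (hasDerivAt_integral_of_dominated_loc_of_deriv_le
        (bound := fun _ => Real.exp (Real.pi * (|z₀.im| + z₀.re / 2)) *
          (2 / (z₀.re / 2) + Real.pi +
            C ^ (z₀.re + z₀.re / 2) * (Real.log C + Real.pi)) * Cφ)
        (F := fun z x => (f x : ℂ) ^ z * φ x)
        (F' := fun z x => Complex.log (f x) * (f x : ℂ) ^ z * φ x)
        (Metric.ball_mem_nhds z₀ hε) (Filter.Eventually.of_forall fun z => hmeas z) hint (hmeas' z₀)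
        hbd (integrable_const _) hdiff).2
    have hFG : F =ᶠ[nhds z₀] fun z => ∫ x in M, (f x : ℂ) ^ z * φ x := by
      filter_upwards [hplane.mem_nhds hz₀] with z hz
      exact hF z hz
    exact hG.congr_of_eventuallyEq hFG
  exact ⟨fun z hz => ((key z hz).differentiableAt).differentiableWithinAt, key⟩
end

section
/- Let a be a positive integer and η > 0. Let d : ℝ → ℝ be real-analytic and nonvanishing on an open neighborhood of [0,η], and let ψ : ℝ → ℂ be smooth with support contained in [0,η). For Re z > 0 define F(z) = ∫₀^η x^{az}·(d(x))^z·ψ(x) dx. Then F extends to a function G : ℂ → ℂ that is holomorphic on ℂ \ {−m/a : m a positive integer} and has at worst a simple pole (pole of order at most 1) at each point −m/a for m a positive integer. -/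
open MeasureTheory Complex

open Set Filter

noncomputable def PP (l ψ : ℝ → ℂ) : ℕ → ℕ → ℝ → ℂ
  | 0, 0 => ψ
  | 0, _ + 1 => 0
  | k + 1, 0 => deriv (PP l ψ k 0)
  | k + 1, i + 1 => fun x => l x * PP l ψ k i x + deriv (PP l ψ k (i + 1)) x

lemma deriv_zero_fun : deriv (0 : ℝ → ℂ) = 0 := by
  funext x
  rw [show (0 : ℝ → ℂ) = fun _ => (0 : ℂ) from rfl]
  simp

lemma PP_of_gt (l ψ : ℝ → ℂ) : ∀ k i, k < i → PP l ψ k i = 0 := by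
  intro k
  induction k with
  | zero => intro i hi; match i, hi with | (j+1), _ => rfl
  | succ k ih =>
    intro i hi
    match i, hi with
    | (j+1), hj =>
      have h1 : PP l ψ k j = 0 := ih j (by omega)
      have h2 : PP l ψ k (j+1) = 0 := ih (j+1) (by omega)
      funext x
      simp [PP, h1, h2, deriv_zero_fun]

lemma PP_smooth_and_eventually_zero {l ψ : ℝ → ℂ} {O : Set ℝ} (hO : IsOpen O)
    (hl : ∀ x ∈ O, ContDiffAt ℝ (⊤ : ℕ∞) l x) (hψ : ContDiff ℝ (⊤ : ℕ∞) ψ)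
    (hts : tsupport ψ ⊆ O) :
    ∀ k i, ContDiff ℝ (⊤ : ℕ∞) (PP l ψ k i) ∧
      ∀ x ∉ tsupport ψ, PP l ψ k i =ᶠ[nhds x] 0 := by
  have hzero : ∀ x ∉ tsupport ψ, ψ =ᶠ[nhds x] 0 := by
    intro x hx
    filter_upwards [(isClosed_tsupport ψ).isOpen_compl.mem_nhds hx] with y hy
    exact image_eq_zero_of_notMem_tsupport hy
  intro k
  induction k with
  | zero =>
    intro i
    match i with
    | 0 => exact ⟨hψ, hzero⟩
    | j + 1 => exact ⟨contDiff_const, fun x _ => Filter.EventuallyEq.refl _ _⟩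
  | succ k ih =>
    intro i
    have hz : ∀ x ∉ tsupport ψ, PP l ψ (k+1) i =ᶠ[nhds x] 0 := by
      intro x hx
      match i with
      | 0 =>
        have h0 := ((ih 0).2 x hx).deriv
        rw [deriv_zero_fun] at h0
        simpa [PP] using h0
      | j + 1 =>
        have h1 := (ih j).2 x hx
        have h2 := ((ih (j+1)).2 x hx).deriv
        rw [deriv_zero_fun] at h2
        filter_upwards [h1, h2] with y hy1 hy2
        simp only [PP, hy1, hy2, Pi.zero_apply, mul_zero, add_zero]
    refine ⟨?_, hz⟩
    rw [contDiff_iff_contDiffAt]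
    intro x
    by_cases hx : x ∈ O
    · have hder : ∀ j, ContDiff ℝ (⊤ : ℕ∞) (deriv (PP l ψ k j)) := by
        intro j
        exact (contDiff_infty_iff_deriv.mp (ih j).1).2
      match i with
      | 0 => exact (hder 0).contDiffAt
      | j + 1 =>
        exact ((hl x hx).mul (ih j).1.contDiffAt).add (hder (j+1)).contDiffAt
    · have hx' : x ∉ tsupport ψ := fun h => hx (hts h)
      exact contDiffAt_const.congr_of_eventuallyEq (hz x hx')

lemma deriv_zero_of_zero_on_Ici {f : ℝ → ℂ} {η : ℝ} (hf : Differentiable ℝ f)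
    (h : ∀ x, η ≤ x → f x = 0) : ∀ x, η ≤ x → deriv f x = 0 := by
  intro x hx
  rcases eq_or_lt_of_le hx with heq | hlt
  · have hinst : ∀ y ∈ Ici x, f y = 0 := fun y hy => h y (heq ▸ hy)
    have h1 : HasDerivWithinAt f (deriv f x) (Ici x) x :=
      (hf x).hasDerivAt.hasDerivWithinAt
    have h2 : HasDerivWithinAt f 0 (Ici x) x :=
      (hasDerivWithinAt_const x (Ici x) (0:ℂ)).congr (fun y hy => hinst y hy)
        (hinst x Set.self_mem_Ici)
    exact (uniqueDiffOn_Ici x x Set.self_mem_Ici).eq_deriv _ h1 h2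
  · have hev : f =ᶠ[nhds x] (fun _ => (0:ℂ)) := by
      filter_upwards [Ioi_mem_nhds hlt] with y hy
      exact h y (le_of_lt hy)
    rw [hev.deriv_eq]
    exact deriv_const x 0

lemma PP_zero_on_Ici {l ψ : ℝ → ℂ} {η : ℝ}
    (hsm : ∀ k i, ContDiff ℝ (⊤ : ℕ∞) (PP l ψ k i))
    (hψη : ∀ x, η ≤ x → ψ x = 0) :
    ∀ k i x, η ≤ x → PP l ψ k i x = 0 := by
  intro k
  induction k with
  | zero =>
    intro i x hx
    match i with
    | 0 => exact hψη x hx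
    | j + 1 => rfl
  | succ k ih =>
    have hder : ∀ j x, η ≤ x → deriv (PP l ψ k j) x = 0 := fun j =>
      deriv_zero_of_zero_on_Ici ((hsm k j).differentiable (by simp)) (ih j)
    intro i x hx
    match i with
    | 0 => exact hder 0 x hx
    | j + 1 => simp [PP, ih j x hx, hder (j+1) x hx]

noncomputable def SS (l L ψ : ℝ → ℂ) (k : ℕ) (z : ℂ) (x : ℝ) : ℂ :=
  Complex.exp (z * L x) * ∑ i ∈ Finset.range (k+1), PP l ψ k i x * z ^ i

lemma hasDerivAt_SS {l L ψ : ℝ → ℂ} {O : Set ℝ} (hO : IsOpen O) (hts : tsupport ψ ⊆ O)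
    (hL : ∀ x ∈ O, HasDerivAt L (l x) x)
    (hPd : ∀ k i, Differentiable ℝ (PP l ψ k i))
    (hPz : ∀ x ∉ tsupport ψ, ∀ k i, PP l ψ k i =ᶠ[nhds x] 0) :
    ∀ k z x, HasDerivAt (SS l L ψ k z) (SS l L ψ (k+1) z x) x := by
  intro k z x
  by_cases hx : x ∈ O
  · have h1 : HasDerivAt (fun y => Complex.exp (z * L y))
        (Complex.exp (z * L x) * (z * l x)) x := ((hL x hx).const_mul z).cexp
    have h2 : HasDerivAt (fun y => ∑ i ∈ Finset.range (k+1), PP l ψ k i y * z ^ i)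
        (∑ i ∈ Finset.range (k+1), deriv (PP l ψ k i) x * z ^ i) x :=
      HasDerivAt.fun_sum fun i _ => ((hPd k i x).hasDerivAt.mul_const _)
    have h3 := h1.mul h2
    convert h3 using 1
    show Complex.exp (z * L x) * ∑ i ∈ Finset.range (k+2), PP l ψ (k+1) i x * z ^ i = _
    have hsum : ∑ i ∈ Finset.range (k+2), PP l ψ (k+1) i x * z ^ i
        = (z * l x) * ∑ i ∈ Finset.range (k+1), PP l ψ k i x * z ^ i
          + ∑ i ∈ Finset.range (k+1), deriv (PP l ψ k i) x * z ^ i := by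
      rw [Finset.sum_range_succ']
      have e1 : ∀ i ∈ Finset.range (k+1), PP l ψ (k+1) (i+1) x * z ^ (i+1)
          = l x * PP l ψ k i x * z ^ (i+1) + deriv (PP l ψ k (i+1)) x * z ^ (i+1) := by
        intro i _
        show (l x * PP l ψ k i x + deriv (PP l ψ k (i+1)) x) * z ^ (i+1) = _
        ring
      rw [Finset.sum_congr rfl e1, Finset.sum_add_distrib]
      have e2 : ∑ i ∈ Finset.range (k+1), deriv (PP l ψ k (i+1)) x * z ^ (i+1)
          = ∑ i ∈ Finset.range k, deriv (PP l ψ k (i+1)) x * z ^ (i+1) := by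
        rw [Finset.sum_range_succ]
        have : PP l ψ k (k+1) = 0 := PP_of_gt l ψ k (k+1) (by omega)
        simp [this, deriv_zero_fun]
      rw [e2]
      have e3 : ∑ i ∈ Finset.range (k+1), deriv (PP l ψ k i) x * z ^ i
          = deriv (PP l ψ k 0) x + ∑ i ∈ Finset.range k, deriv (PP l ψ k (i+1)) x * z ^ (i+1) := by
        rw [Finset.sum_range_succ']
        ring
      rw [e3, Finset.mul_sum]
      have e4 : ∀ i ∈ Finset.range (k+1), l x * PP l ψ k i x * z ^ (i+1)
          = z * l x * (PP l ψ k i x * z ^ i) := by intro i _; ring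
      rw [Finset.sum_congr rfl e4]
      show _ + _ + PP l ψ (k+1) 0 x * z ^ 0 = _
      have : PP l ψ (k+1) 0 x = deriv (PP l ψ k 0) x := rfl
      rw [this]
      ring
    rw [hsum]
    ring
    case e'_4 => rfl
    case e'_8 => rfl
  · have hx' : x ∉ tsupport ψ := fun h => hx (hts h)
    have hall : ∀ᶠ y in nhds x, ∀ i ∈ (Finset.range (k+1) : Set ℕ), PP l ψ k i y = 0 :=
      (Finset.range (k+1)).finite_toSet.eventually_all.2 (fun i _ => hPz x hx' k i)
    have hev : SS l L ψ k z =ᶠ[nhds x] (fun _ => (0:ℂ)) := by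
      filter_upwards [hall] with y hy
      unfold SS
      rw [Finset.sum_congr rfl (fun i hi => by
        rw [hy i (Finset.mem_coe.2 hi), zero_mul])]
      simp
    have hval : SS l L ψ (k+1) z x = 0 := by
      unfold SS
      rw [Finset.sum_congr rfl (fun i hi => by
        rw [(hPz x hx' (k+1) i).self_of_nhds, Pi.zero_apply, zero_mul])]
      simp
    rw [hval]
    exact (hasDerivAt_const x (0:ℂ)).congr_of_eventuallyEq hev

noncomputable def JJ (a : ℕ) (η : ℝ) (l L ψ : ℝ → ℂ) (k : ℕ) (z : ℂ) : ℂ :=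
  ∫ x in Set.Ioo (0:ℝ) η, Complex.exp ((Real.log x : ℂ) * ((a:ℂ) * z + (k:ℂ))) * SS l L ψ k z x

lemma norm_exp_ofReal_mul (t : ℝ) (s : ℂ) :
    ‖Complex.exp ((t:ℂ) * s)‖ = Real.exp (t * s.re) := by
  rw [Complex.norm_exp]
  congr 1
  simp

lemma exp_log_mul_le {η x r : ℝ} (hx : x ∈ Ioo 0 η) (hr : 0 ≤ r) :
    Real.exp (Real.log x * r) ≤ max 1 (Real.exp (Real.log η * r)) := by
  rcases le_or_gt (Real.log x) 0 with h | h
  · exact le_max_of_le_left (Real.exp_le_one_iff.2 (mul_nonpos_iff.2 (Or.inr ⟨h, hr⟩)))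
  · refine le_max_of_le_right (Real.exp_le_exp.2 ?_)
    exact mul_le_mul_of_nonneg_right ((Real.log_le_log_iff hx.1 (hx.1.trans hx.2)).2 hx.2.le) hr

lemma integrand_contOn {η : ℝ} {l L ψ : ℝ → ℂ} {k : ℕ} {z : ℂ} (s : ℂ)
    (hSc : Continuous (SS l L ψ k z)) :
    ContinuousOn (fun x : ℝ => Complex.exp ((Real.log x : ℂ) * s) * SS l L ψ k z x)
      (Ioo (0:ℝ) η) := by
  have hlog : ContinuousOn Real.log (Ioo (0:ℝ) η) :=
    Real.continuousOn_log.mono (fun x hx => ne_of_gt hx.1)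
  exact ((Complex.continuous_exp.comp_continuousOn
    (((Complex.continuous_ofReal.comp_continuousOn hlog)).mul continuousOn_const))).mul
    hSc.continuousOn

lemma integrand_integrableOn {a : ℕ} {η : ℝ} (hη : 0 < η) {l L ψ : ℝ → ℂ} {k : ℕ} {z : ℂ}
    (hSc : Continuous (SS l L ψ k z)) (hz : 0 < (a:ℝ) * z.re + k) :
    IntegrableOn (fun x : ℝ => Complex.exp ((Real.log x : ℂ) * ((a:ℂ) * z + (k:ℂ)))
      * SS l L ψ k z x) (Ioo (0:ℝ) η) := by
  obtain ⟨C, hC⟩ := (isCompact_Icc (a := (0:ℝ)) (b := η)).exists_bound_of_continuousOn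
    hSc.continuousOn
  set s : ℂ := (a:ℂ) * z + (k:ℂ) with hs
  have hsre : s.re = (a:ℝ) * z.re + k := by simp [hs]
  have hmeas : AEStronglyMeasurable
      (fun x : ℝ => Complex.exp ((Real.log x : ℂ) * s) * SS l L ψ k z x)
      (volume.restrict (Ioo (0:ℝ) η)) :=
    (integrand_contOn s hSc).aestronglyMeasurable measurableSet_Ioo
  refine Integrable.mono' (g := fun _ => max 1 (Real.exp (Real.log η * s.re)) * C)
    (integrableOn_const measure_Ioo_lt_top.ne) hmeas ?_
  rw [ae_restrict_iff' measurableSet_Ioo]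
  refine Eventually.of_forall (fun x hx => ?_)
  rw [norm_mul, norm_exp_ofReal_mul]
  refine mul_le_mul (exp_log_mul_le hx (by rw [hsre]; exact hz.le)) ?_ (norm_nonneg _)
    (le_trans zero_le_one (le_max_left _ _))
  exact hC x (Ioo_subset_Icc_self hx)

lemma JJ_step {a : ℕ} {η : ℝ} (hη : 0 < η) {l L ψ : ℝ → ℂ} {k : ℕ} {z : ℂ}
    (hSc : ∀ k, Continuous (SS l L ψ k z))
    (hSd : ∀ k x, HasDerivAt (SS l L ψ k z) (SS l L ψ (k+1) z x) x)
    (hSη : ∀ k x, η ≤ x → SS l L ψ k z x = 0)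
    (hz : 0 < (a:ℝ) * z.re + k) :
    JJ a η l L ψ k z = -((a:ℂ) * z + (k:ℂ) + 1)⁻¹ * JJ a η l L ψ (k+1) z := by
  set s : ℂ := (a:ℂ) * z + (k:ℂ) with hs
  have hsre : (s+1).re = (a:ℝ) * z.re + k + 1 := by simp [hs]
  have hs1pos : 0 < (s+1).re := by rw [hsre]; linarith
  have hs1ne : s + 1 ≠ 0 := by
    intro h; rw [h] at hs1pos; simp at hs1pos
  have hcast : ((a:ℂ) * z + ((k+1 : ℕ):ℂ)) = s + 1 := by rw [hs]; push_cast; ring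
  set A : ℝ → ℂ := fun x =>
    if x ≤ 0 then 0 else Complex.exp ((Real.log x : ℂ) * (s+1)) * SS l L ψ k z x / (s+1)
    with hA
  set f' : ℝ → ℂ := fun x => Complex.exp ((Real.log x : ℂ) * s) * SS l L ψ k z x
    + Complex.exp ((Real.log x : ℂ) * (s+1)) * SS l L ψ (k+1) z x / (s+1) with hf'
  obtain ⟨C, hC⟩ := (isCompact_Icc (a := (0:ℝ)) (b := η)).exists_bound_of_continuousOn
    (hSc k).continuousOn
  have hcont : ContinuousOn A (Icc 0 η) := by
    intro x hx
    rcases eq_or_lt_of_le hx.1 with heq | hxpos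
    · subst heq
      refine ContinuousWithinAt.mono ?_ Icc_subset_Ici_self
      rw [← continuousWithinAt_Ioi_iff_Ici]
      have hA0 : A 0 = 0 := if_pos le_rfl
      unfold ContinuousWithinAt
      rw [hA0]
      have hbnd : ∀ᶠ y in nhdsWithin 0 (Ioi 0), ‖A y‖ ≤
          Real.exp (Real.log y * (s+1).re) * (C / ‖s+1‖) := by
        filter_upwards [Ioo_mem_nhdsGT_of_mem (left_mem_Ico.2 hη)] with y hy
        rw [hA]
        simp only [not_le.2 hy.1, if_false]
        rw [norm_div, norm_mul, norm_exp_ofReal_mul, mul_div_assoc]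
        have hCy := hC y (Ioo_subset_Icc_self hy)
        gcongr
      have h1 : Tendsto (fun y : ℝ => Real.log y * (s+1).re) (nhdsWithin 0 (Ioi 0)) atBot :=
        Real.tendsto_log_nhdsGT_zero.atBot_mul_const hs1pos
      have h2 : Tendsto (fun y : ℝ => Real.exp (Real.log y * (s+1).re) * (C/‖s+1‖))
          (nhdsWithin 0 (Ioi 0)) (nhds 0) := by
        have := (Real.tendsto_exp_atBot.comp h1).mul_const (C/‖s+1‖)
        simpa using this
      exact squeeze_zero_norm' hbnd h2
    · have hl : ContinuousAt Real.log x := Real.continuousAt_log (ne_of_gt hxpos)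
      have h1 : ContinuousAt (fun y : ℝ => ((Real.log y : ℂ) * (s+1))) x :=
        (Complex.continuous_ofReal.continuousAt.comp hl).mul continuousAt_const
      have hmain : ContinuousAt
          (fun y => Complex.exp ((Real.log y:ℂ)*(s+1)) * SS l L ψ k z y / (s+1)) x :=
        ((Complex.continuous_exp.continuousAt.comp h1).mul (hSc k).continuousAt).div_const _
      have hAx : A =ᶠ[nhds x]
          (fun y => Complex.exp ((Real.log y:ℂ)*(s+1)) * SS l L ψ k z y / (s+1)) := by
        filter_upwards [Ioi_mem_nhds hxpos] with y hy
        rw [hA]; simp only [not_le.2 (mem_Ioi.1 hy), if_false]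
      exact (hmain.congr hAx.symm).continuousWithinAt
  have hderiv : ∀ x ∈ Ioo (0:ℝ) η, HasDerivWithinAt A (f' x) (Ioi x) x := by
    intro x hx
    have hx0 : (0:ℝ) < x := hx.1
    have hxne : (x:ℂ) ≠ 0 := ofReal_ne_zero.2 (ne_of_gt hx0)
    have hlog : HasDerivAt (fun y : ℝ => ((Real.log y : ℂ))) (((x⁻¹:ℝ):ℂ)) x :=
      (Real.hasDerivAt_log (ne_of_gt hx0)).ofReal_comp
    have h1 : HasDerivAt (fun y : ℝ => Complex.exp ((Real.log y : ℂ) * (s+1)))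
        (Complex.exp ((Real.log x:ℂ)*(s+1)) * (((x⁻¹:ℝ):ℂ) * (s+1))) x :=
      (hlog.mul_const (s+1)).cexp
    have h2 := (h1.mul (hSd k x)).div_const (s+1)
    have hexp : Complex.exp ((Real.log x:ℂ)*(s+1))
        = Complex.exp ((Real.log x:ℂ)*s) * (x:ℂ) := by
      rw [mul_add, mul_one, Complex.exp_add]
      congr 1
      rw [← Complex.ofReal_exp, Real.exp_log hx0]
    have hmain : HasDerivAt
        (fun y => Complex.exp ((Real.log y:ℂ)*(s+1)) * SS l L ψ k z y / (s+1)) (f' x) x := by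
      convert h2 using 1
      show f' x = _
      simp only [hf']
      rw [hexp]
      push_cast
      set E0 := Complex.exp ((Real.log x:ℂ) * s) with hE0
      set S1 := SS l L ψ k z x with hS1
      set S2 := SS l L ψ (k+1) z x with hS2
      field_simp
      case e'_4 => rfl
      case e'_8 => rfl
    have hev : A =ᶠ[nhds x]
        (fun y => Complex.exp ((Real.log y:ℂ)*(s+1)) * SS l L ψ k z y / (s+1)) := by
      filter_upwards [Ioi_mem_nhds hx0] with y hy
      rw [hA]; simp only [not_le.2 (mem_Ioi.1 hy), if_false]
    exact (hmain.congr_of_eventuallyEq hev).hasDerivWithinAt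
  have i1 : IntegrableOn (fun x : ℝ => Complex.exp ((Real.log x : ℂ) * s) * SS l L ψ k z x)
      (Ioo (0:ℝ) η) := by
    have := integrand_integrableOn (a := a) hη (hSc k) hz
    rwa [← hs] at this
  have i2 : IntegrableOn (fun x : ℝ => Complex.exp ((Real.log x : ℂ) * (s+1))
      * SS l L ψ (k+1) z x) (Ioo (0:ℝ) η) := by
    have := integrand_integrableOn (a := a) hη (hSc (k+1))
      (by push_cast; linarith : 0 < (a:ℝ) * z.re + (k+1:ℕ))
    rwa [hcast] at this
  have hint : IntervalIntegrable f' volume 0 η := by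
    rw [intervalIntegrable_iff_integrableOn_Ioo_of_le hη.le]
    exact i1.add (i2.div_const _)
  have hA0 : A 0 = 0 := if_pos le_rfl
  have hAη : A η = 0 := by
    rw [hA]
    simp only [not_le.2 hη, if_false, hSη k η le_rfl, mul_zero, zero_div]
  have key := intervalIntegral.integral_eq_sub_of_hasDeriv_right_of_le hη.le hcont hderiv hint
  rw [hAη, hA0, sub_zero] at key
  rw [intervalIntegral.integral_of_le hη.le, integral_Ioc_eq_integral_Ioo] at key
  rw [hf'] at key
  rw [integral_add i1 (i2.div_const _), integral_div] at key
  have hJ1 : JJ a η l L ψ k z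
      = ∫ x in Ioo (0:ℝ) η, Complex.exp ((Real.log x : ℂ) * s) * SS l L ψ k z x := by
    rw [JJ, ← hs]
  have hJ2 : JJ a η l L ψ (k+1) z
      = ∫ x in Ioo (0:ℝ) η, Complex.exp ((Real.log x : ℂ) * (s+1)) * SS l L ψ (k+1) z x := by
    rw [JJ, hcast]
  rw [← hJ1, ← hJ2] at key
  have : JJ a η l L ψ k z = -(JJ a η l L ψ (k+1) z / (s+1)) :=
    eq_neg_of_add_eq_zero_left key
  rw [this, div_eq_inv_mul, neg_mul]

lemma exp_log_mul_bound {η x r lo hi : ℝ} (hx : x ∈ Ioo 0 η) (hlo : 0 < lo) (h1 : lo ≤ r)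
    (h2 : r ≤ hi) :
    Real.exp (Real.log x * r) ≤ 1 + Real.exp (Real.log η * hi) ∧
    |Real.log x| * Real.exp (Real.log x * r) ≤
      1/lo + |Real.log η| * Real.exp (Real.log η * hi) := by
  have hhi : 0 < hi := lt_of_lt_of_le hlo (h1.trans h2)
  rcases le_or_gt (Real.log x) 0 with h | h
  · constructor
    · have : Real.exp (Real.log x * r) ≤ 1 := by
        rw [← Real.exp_zero]
        exact Real.exp_le_exp.2 (mul_nonpos_iff.2 (Or.inr ⟨h, hlo.le.trans h1⟩))
      nlinarith [Real.exp_pos (Real.log η * hi)]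
    · have h3 : Real.exp (Real.log x * r) ≤ Real.exp (Real.log x * lo) :=
        Real.exp_le_exp.2 (by nlinarith)
      set u : ℝ := -Real.log x with hu
      have hu0 : 0 ≤ u := by simp [hu]; linarith
      have habs : |Real.log x| = u := by rw [abs_of_nonpos h]
      have hkey : u * Real.exp (Real.log x * lo) ≤ 1/lo := by
        have he : Real.log x * lo = -(lo * u) := by rw [hu]; ring
        rw [he, Real.exp_neg]
        have ht : lo * u ≤ Real.exp (lo * u) := by
          have := Real.add_one_le_exp (lo * u)
          linarith
        rw [mul_inv_le_iff₀ (Real.exp_pos _), one_div, inv_mul_eq_div, le_div_iff₀ hlo]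
        linarith
      have : |Real.log x| * Real.exp (Real.log x * r) ≤ u * Real.exp (Real.log x * lo) := by
        rw [habs]
        exact mul_le_mul_of_nonneg_left h3 hu0
      have hnn : 0 ≤ |Real.log η| * Real.exp (Real.log η * hi) :=
        mul_nonneg (abs_nonneg _) (Real.exp_pos _).le
      exact le_trans (le_trans this hkey) (by linarith)
  · have hlogle : Real.log x ≤ Real.log η :=
      Real.log_le_log hx.1 hx.2.le
    have hlogη : 0 < Real.log η := lt_of_lt_of_le h hlogle
    have hexple : Real.exp (Real.log x * r) ≤ Real.exp (Real.log η * hi) := by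
      apply Real.exp_le_exp.2
      calc Real.log x * r ≤ Real.log x * hi := by nlinarith
        _ ≤ Real.log η * hi := by nlinarith
    constructor
    · linarith
    · have : |Real.log x| * Real.exp (Real.log x * r)
          ≤ |Real.log η| * Real.exp (Real.log η * hi) := by
        rw [abs_of_pos h, abs_of_pos hlogη]
        exact mul_le_mul hlogle hexple (Real.exp_pos _).le hlogη.le
      have : (0:ℝ) < 1/lo := by positivity
      linarith

lemma JJ_diff {a : ℕ} {η : ℝ} (hη : 0 < η) {l L ψ : ℝ → ℂ} {k : ℕ} {z₀ : ℂ}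
    (hSc : ∀ z, Continuous (SS l L ψ k z))
    (hLc : ContinuousOn L (Icc 0 η))
    (hPc : ∀ i, Continuous (PP l ψ k i))
    (hz : 0 < (a:ℝ) * z₀.re + k) :
    DifferentiableAt ℂ (JJ a η l L ψ k) z₀ := by
  have ha0 : (0:ℝ) ≤ a := Nat.cast_nonneg a
  set σ : ℝ := (a:ℝ) * z₀.re + k with hσ
  set δ : ℝ := min (σ / (2*((a:ℝ)+1))) 1 with hδ
  have hδpos : 0 < δ := lt_min (by positivity) one_pos
  have hδ1 : δ ≤ 1 := min_le_right _ _
  set lo : ℝ := σ/2 with hloeq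
  set hi : ℝ := σ + a with hhieq
  have hlo : 0 < lo := by positivity
  have hδσ : (a:ℝ) * δ ≤ σ/2 := by
    have h1 : δ ≤ σ / (2*((a:ℝ)+1)) := min_le_left _ _
    have h2 : (a:ℝ) * δ ≤ (a:ℝ) * (σ / (2*((a:ℝ)+1))) := mul_le_mul_of_nonneg_left h1 ha0
    have h3 : (a:ℝ) * (σ / (2*((a:ℝ)+1))) ≤ σ/2 := by
      rw [← mul_div_assoc, div_le_div_iff₀ (by positivity) (by norm_num : (0:ℝ) < 2)]
      nlinarith
    linarith
  have hrange : ∀ z ∈ Metric.ball z₀ δ,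
      lo ≤ (a:ℝ) * z.re + k ∧ (a:ℝ) * z.re + k ≤ hi := by
    intro z hzb
    have hre : |z.re - z₀.re| ≤ dist z z₀ := by
      rw [Complex.dist_eq]
      simpa using Complex.abs_re_le_norm (z - z₀)
    have hd : dist z z₀ < δ := Metric.mem_ball.1 hzb
    have h1 : |z.re - z₀.re| ≤ δ := le_trans hre hd.le
    obtain ⟨h2, h3⟩ := abs_le.1 h1
    constructor
    · nlinarith [mul_le_mul_of_nonneg_left h2 ha0]
    · nlinarith [mul_le_mul_of_nonneg_left h3 ha0]
  obtain ⟨CL, hCL⟩ := isCompact_Icc.exists_bound_of_continuousOn hLc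
  have hCL0 : 0 ≤ CL := le_trans (norm_nonneg _) (hCL 0 (left_mem_Icc.2 hη.le))
  set M : ℝ := ‖z₀‖ + 1 with hM
  have hM1 : 1 ≤ M := by
    have := norm_nonneg z₀
    rw [hM]; linarith
  have hM0 : 0 ≤ M := le_trans zero_le_one hM1
  have hCP : ∀ i : ℕ, ∃ C : ℝ, 0 ≤ C ∧ ∀ x ∈ Icc (0:ℝ) η, ‖PP l ψ k i x‖ ≤ C := by
    intro i
    obtain ⟨C, hC⟩ := isCompact_Icc.exists_bound_of_continuousOn (hPc i).continuousOn
    exact ⟨C, le_trans (norm_nonneg _) (hC 0 (left_mem_Icc.2 hη.le)), hC⟩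
  choose CP hCP0 hCPb using hCP
  set B1 : ℝ := ∑ i ∈ Finset.range (k+1), CP i * M ^ i with hB1
  set B2 : ℝ := ∑ i ∈ Finset.range (k+1), CP i * (i * M ^ (i-1)) with hB2
  have hB10 : 0 ≤ B1 :=
    Finset.sum_nonneg fun i _ => mul_nonneg (hCP0 i) (pow_nonneg hM0 i)
  have hB20 : 0 ≤ B2 :=
    Finset.sum_nonneg fun i _ => mul_nonneg (hCP0 i)
      (mul_nonneg (Nat.cast_nonneg i) (pow_nonneg hM0 _))
  set C2 : ℝ := Real.exp (M * CL) with hC2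
  have hC20 : 0 ≤ C2 := (Real.exp_pos _).le
  set K1 : ℝ := 1 + Real.exp (Real.log η * hi) with hK1
  set K2 : ℝ := 1/lo + |Real.log η| * Real.exp (Real.log η * hi) with hK2
  set bnd : ℝ → ℝ :=
    fun _ => (a:ℝ) * C2 * B1 * K2 + (CL * C2 * B1 + C2 * B2) * K1 with hbnd
  -- measurability facts
  have hlogC : ContinuousOn (fun x : ℝ => (Real.log x : ℂ)) (Ioo (0:ℝ) η) :=
    Complex.continuous_ofReal.comp_continuousOn
      (Real.continuousOn_log.mono fun x hx => ne_of_gt hx.1)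
  have hLC : ContinuousOn L (Ioo (0:ℝ) η) := hLc.mono Ioo_subset_Icc_self
  have hsumC : Continuous (fun x : ℝ => ∑ i ∈ Finset.range (k+1),
      PP l ψ k i x * ((i:ℂ) * z₀ ^ (i-1))) :=
    continuous_finset_sum _ fun i _ => (hPc i).mul continuous_const
  have hF'_contOn : ContinuousOn (fun x : ℝ =>
      ((Real.log x : ℂ) * (a:ℂ) + L x)
        * (Complex.exp ((Real.log x : ℂ) * ((a:ℂ) * z₀ + (k:ℂ))) * SS l L ψ k z₀ x)
      + Complex.exp ((Real.log x : ℂ) * ((a:ℂ) * z₀ + (k:ℂ)))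
        * (Complex.exp (z₀ * L x)
          * ∑ i ∈ Finset.range (k+1), PP l ψ k i x * ((i:ℂ) * z₀ ^ (i-1))))
      (Ioo (0:ℝ) η) := by
    refine ContinuousOn.add ?_ ?_
    · exact ((hlogC.mul continuousOn_const).add hLC).mul
        (integrand_contOn _ (hSc z₀))
    · refine ContinuousOn.mul ?_ ?_
      · exact Complex.continuous_exp.comp_continuousOn (hlogC.mul continuousOn_const)
      · exact (Complex.continuous_exp.comp_continuousOn
          (continuousOn_const.mul hLC)).mul hsumC.continuousOn
  -- apply dominated differentiation
  have key := hasDerivAt_integral_of_dominated_loc_of_deriv_le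
    (F := fun z x => Complex.exp ((Real.log x : ℂ) * ((a:ℂ) * z + (k:ℂ))) * SS l L ψ k z x)
    (F' := fun z x =>
      ((Real.log x : ℂ) * (a:ℂ) + L x)
        * (Complex.exp ((Real.log x : ℂ) * ((a:ℂ) * z + (k:ℂ))) * SS l L ψ k z x)
      + Complex.exp ((Real.log x : ℂ) * ((a:ℂ) * z + (k:ℂ)))
        * (Complex.exp (z * L x)
          * ∑ i ∈ Finset.range (k+1), PP l ψ k i x * ((i:ℂ) * z ^ (i-1))))
    (μ := volume.restrict (Ioo (0:ℝ) η)) (x₀ := z₀) (bound := bnd) (Metric.ball_mem_nhds z₀ hδpos)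
    (Eventually.of_forall fun z =>
      (integrand_contOn _ (hSc z)).aestronglyMeasurable measurableSet_Ioo)
    (integrand_integrableOn hη (hSc z₀) hz)
    (hF'_contOn.aestronglyMeasurable measurableSet_Ioo)
    ?_ (integrableOn_const measure_Ioo_lt_top.ne) ?_
  · exact key.2.differentiableAt
  · -- the bound
    rw [ae_restrict_iff' measurableSet_Ioo]
    refine Eventually.of_forall (fun x hx => ?_)
    intro z hzb
    obtain ⟨hr1, hr2⟩ := hrange z hzb
    set r : ℝ := (a:ℝ) * z.re + k with hr
    have hzM : ‖z‖ ≤ M := by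
      have h1 : ‖z‖ ≤ ‖z₀‖ + ‖z - z₀‖ := by
        calc ‖z‖ = ‖z₀ + (z - z₀)‖ := by ring_nf
          _ ≤ ‖z₀‖ + ‖z - z₀‖ := norm_add_le _ _
      have h2 : ‖z - z₀‖ < δ := by
        rw [← dist_eq_norm]; exact Metric.mem_ball.1 hzb
      rw [hM]; linarith
    have hsre : ((a:ℂ) * z + (k:ℂ)).re = r := by simp [hr]
    have hE1 : ‖Complex.exp ((Real.log x : ℂ) * ((a:ℂ) * z + (k:ℂ)))‖
        = Real.exp (Real.log x * r) := by
      rw [norm_exp_ofReal_mul, hsre]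
    have hE2 : ‖Complex.exp (z * L x)‖ ≤ C2 := by
      rw [Complex.norm_exp]
      refine Real.exp_le_exp.2 ?_
      calc (z * L x).re ≤ ‖z * L x‖ := Complex.re_le_norm _
        _ = ‖z‖ * ‖L x‖ := norm_mul _ _
        _ ≤ M * CL := mul_le_mul hzM (hCL x (Ioo_subset_Icc_self hx)) (norm_nonneg _) hM0
    have hP1 : ‖∑ i ∈ Finset.range (k+1), PP l ψ k i x * z ^ i‖ ≤ B1 := by
      refine le_trans (norm_sum_le _ _) (Finset.sum_le_sum fun i _ => ?_)
      rw [norm_mul, norm_pow]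
      exact mul_le_mul (hCPb i x (Ioo_subset_Icc_self hx))
        (pow_le_pow_left₀ (norm_nonneg _) hzM i) (pow_nonneg (norm_nonneg _) i) (hCP0 i)
    have hP2 : ‖∑ i ∈ Finset.range (k+1), PP l ψ k i x * ((i:ℂ) * z ^ (i-1))‖ ≤ B2 := by
      refine le_trans (norm_sum_le _ _) (Finset.sum_le_sum fun i _ => ?_)
      rw [norm_mul, norm_mul, norm_pow, Complex.norm_natCast]
      refine mul_le_mul (hCPb i x (Ioo_subset_Icc_self hx)) ?_ ?_ (hCP0 i)
      · exact mul_le_mul_of_nonneg_left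
          (pow_le_pow_left₀ (norm_nonneg _) hzM _) (Nat.cast_nonneg i)
      · positivity
    have hSSb : ‖SS l L ψ k z x‖ ≤ C2 * B1 := by
      rw [SS, norm_mul]
      exact mul_le_mul hE2 hP1 (norm_nonneg _) hC20
    have hcoef : ‖(Real.log x : ℂ) * (a:ℂ) + L x‖ ≤ (a:ℝ) * |Real.log x| + CL := by
      refine le_trans (norm_add_le _ _) ?_
      rw [norm_mul, Complex.norm_real, Complex.norm_natCast, Real.norm_eq_abs]
      refine add_le_add (le_of_eq (mul_comm _ _)) (hCL x (Ioo_subset_Icc_self hx))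
    obtain ⟨hb1, hb2⟩ := exp_log_mul_bound hx hlo hr1 hr2
    calc ‖_ + _‖ ≤ ((a:ℝ) * |Real.log x| + CL) * (Real.exp (Real.log x * r) * (C2 * B1))
          + Real.exp (Real.log x * r) * (C2 * B2) := by
          refine le_trans (norm_add_le _ _) (add_le_add ?_ ?_)
          · rw [norm_mul, norm_mul, hE1]
            refine mul_le_mul hcoef ?_ (by positivity) (by positivity)
            exact mul_le_mul_of_nonneg_left hSSb (Real.exp_pos _).le
          · rw [norm_mul, norm_mul, hE1]
            refine mul_le_mul_of_nonneg_left ?_ (Real.exp_pos _).le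
            exact mul_le_mul hE2 hP2 (norm_nonneg _) hC20
      _ = (a:ℝ) * C2 * B1 * (|Real.log x| * Real.exp (Real.log x * r))
          + (CL * C2 * B1 + C2 * B2) * Real.exp (Real.log x * r) := by ring
      _ ≤ (a:ℝ) * C2 * B1 * K2 + (CL * C2 * B1 + C2 * B2) * K1 := by
          refine add_le_add ?_ ?_
          · refine mul_le_mul_of_nonneg_left ?_ ?_
            · rw [hK2]; exact hb2
            · exact mul_nonneg (mul_nonneg ha0 hC20) hB10
          · refine mul_le_mul_of_nonneg_left ?_ ?_
            · rw [hK1]; exact hb1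
            · exact add_nonneg (mul_nonneg (mul_nonneg hCL0 hC20) hB10)
                (mul_nonneg hC20 hB20)
      _ = bnd x := rfl
  · -- differentiability in z for fixed x
    refine Eventually.of_forall (fun x => ?_)
    intro z _
    have hd1 : HasDerivAt (fun z : ℂ => (Real.log x : ℂ) * ((a:ℂ) * z + (k:ℂ)))
        ((Real.log x : ℂ) * (a:ℂ)) z := by
      have := (((hasDerivAt_id z).const_mul ((a:ℂ))).add_const ((k:ℂ))).const_mul
        ((Real.log x : ℂ))
      simpa using this
    have he1 := hd1.cexp
    have he2 : HasDerivAt (fun z : ℂ => Complex.exp (z * L x))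
        (Complex.exp (z * L x) * L x) z := by
      have := ((hasDerivAt_id z).mul_const (L x)).cexp
      simpa using this
    have hp : HasDerivAt (fun z : ℂ => ∑ i ∈ Finset.range (k+1), PP l ψ k i x * z ^ i)
        (∑ i ∈ Finset.range (k+1), PP l ψ k i x * ((i:ℂ) * z ^ (i-1))) z :=
      HasDerivAt.fun_sum fun i _ => (hasDerivAt_pow i z).const_mul _
    have hcomb := he1.mul (he2.mul hp)
    simp only [Pi.mul_apply] at hcomb
    simp only [SS]
    convert hcomb using 1
    set E1 := Complex.exp ((Real.log x : ℂ) * ((a:ℂ) * z + (k:ℂ))) with hE1'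
    set E2 := Complex.exp (z * L x) with hE2'
    set P1 := ∑ i ∈ Finset.range (k+1), PP l ψ k i x * z ^ i with hP1'
    set P2 := ∑ i ∈ Finset.range (k+1), PP l ψ k i x * ((i:ℂ) * z ^ (i-1)) with hP2'
    case e'_4 => rfl
    case e'_8 => rfl
    ring

noncomputable def GkD (a : ℕ) (η : ℝ) (l L ψ : ℝ → ℂ) (k : ℕ) (z : ℂ) : ℂ :=
  (-1:ℂ)^k * (∏ j ∈ Finset.Icc 1 k, ((a:ℂ) * z + (j:ℂ)))⁻¹ * JJ a η l L ψ k z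

noncomputable def NN (a : ℕ) (z : ℂ) : ℕ := a * (⌈‖z‖⌉₊ + 1)


/-- `G` has at worst a pole of order at most `n` at `w`: the function
`(z - w)^n * G z` extends holomorphically across `w`. -/
def PoleOrderAtMost (G : ℂ → ℂ) (w : ℂ) (n : ℕ) : Prop :=
  ∃ H : ℂ → ℂ, AnalyticAt ℂ H w ∧ ∀ᶠ z in nhdsWithin w {w}ᶜ, H z = (z - w) ^ n * G z

theorem one_dim_meromorphy
    (a : ℕ) (ha : 0 < a) (η : ℝ) (hη : 0 < η)
    (V : Set ℝ) (hV : IsOpen V) (hVI : Set.Icc (0 : ℝ) η ⊆ V)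
    (d : ℝ → ℝ) (hd : AnalyticOnNhd ℝ d V) (hd0 : ∀ x ∈ V, d x ≠ 0)
    (ψ : ℝ → ℂ) (hψ : ContDiff ℝ (⊤ : ℕ∞) ψ) (hψs : Function.support ψ ⊆ Set.Ico 0 η)
    (F : ℂ → ℂ)
    (hF : ∀ z : ℂ, 0 < z.re →
      F z = ∫ x in Set.Ioo (0 : ℝ) η, (x : ℂ) ^ ((a : ℂ) * z) * (d x : ℂ) ^ z * ψ x) :
    ∃ G : ℂ → ℂ,
      (∀ z : ℂ, 0 < z.re → G z = F z) ∧
      DifferentiableOn ℂ G {z : ℂ | ∀ m : ℕ, 0 < m → z ≠ -((m : ℂ) / (a : ℂ))} ∧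
      ∀ m : ℕ, 0 < m → PoleOrderAtMost G (-((m : ℂ) / (a : ℂ))) 1 := by
  have haR : (0:ℝ) < a := Nat.cast_pos.2 ha
  have haC : ((a:ℂ)) ≠ 0 := Nat.cast_ne_zero.2 ha.ne'
  have hdc : ContinuousOn d (Icc 0 η) := hd.continuousOn.mono hVI
  -- constant sign of d on [0, η]
  have hsgn : (∀ x ∈ Icc (0:ℝ) η, 0 < d x) ∨ (∀ x ∈ Icc (0:ℝ) η, d x < 0) := by
    by_contra hcon
    push_neg at hcon
    obtain ⟨⟨x₁, hx₁, hx₁'⟩, ⟨x₂, hx₂, hx₂'⟩⟩ := hcon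
    have h1 : d x₁ < 0 := lt_of_le_of_ne hx₁' (hd0 x₁ (hVI hx₁))
    have h2 : 0 < d x₂ := lt_of_le_of_ne hx₂' (Ne.symm (hd0 x₂ (hVI hx₂)))
    have huIcc : uIcc x₁ x₂ ⊆ Icc 0 η := uIcc_subset_Icc hx₁ hx₂
    have h0 : (0:ℝ) ∈ uIcc (d x₁) (d x₂) := mem_uIcc.2 (Or.inl ⟨h1.le, h2.le⟩)
    obtain ⟨y, hy, hy0⟩ := intermediate_value_uIcc (hdc.mono huIcc) h0
    exact hd0 y (hVI (huIcc hy)) hy0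
  obtain ⟨ε, c, hεd, hLog⟩ :
      ∃ (ε : ℝ) (c : ℂ), (∀ x ∈ Icc (0:ℝ) η, 0 < ε * d x) ∧
        (∀ x : ℝ, 0 < ε * d x →
          Complex.log ((d x : ℝ) : ℂ) = ((Real.log (ε * d x) : ℝ) : ℂ) + c) := by
    rcases hsgn with hpos | hneg
    · refine ⟨1, 0, fun x hx => by simpa using hpos x hx, fun x hx => ?_⟩
      rw [one_mul] at hx
      simp only [one_mul, add_zero]
      exact (Complex.ofReal_log hx.le).symm
    · refine ⟨-1, Real.pi * Complex.I, fun x hx => by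
        rw [neg_one_mul]; exact neg_pos.2 (hneg x hx), fun x hx => ?_⟩
      have hdx : d x < 0 := by nlinarith
      have hdef : Complex.log ((d x : ℝ) : ℂ)
          = ((Real.log ‖((d x : ℝ) : ℂ)‖ : ℝ) : ℂ)
            + ((Complex.arg ((d x : ℝ) : ℂ) : ℝ) : ℂ) * Complex.I := rfl
      rw [hdef, Complex.norm_real, Real.norm_eq_abs, abs_of_neg hdx, Complex.arg_ofReal_of_neg hdx,
        neg_one_mul]
  -- the open set U and the logarithm branch L
  set U : Set ℝ := V ∩ (fun x => ε * d x) ⁻¹' (Ioi 0) with hUdef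
  have hUopen : IsOpen U :=
    (continuousOn_const.mul hd.continuousOn).isOpen_inter_preimage hV isOpen_Ioi
  have hUV : U ⊆ V := inter_subset_left
  have hIccU : Icc 0 η ⊆ U := fun x hx => ⟨hVI hx, hεd x hx⟩
  set ℓr : ℝ → ℝ := fun x => Real.log (ε * d x) with hℓr
  set L : ℝ → ℂ := fun x => ((ℓr x : ℝ) : ℂ) + c with hLdef
  set lf : ℝ → ℂ := fun x => ((deriv ℓr x : ℝ) : ℂ) with hlf
  have hdsm : ContDiffOn ℝ (⊤:ℕ∞) (fun x => ε * d x) V :=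
    contDiffOn_const.mul (hd.contDiffOn hV.uniqueDiffOn)
  have hℓsm : ContDiffOn ℝ (⊤:ℕ∞) ℓr U := by
    have := Real.contDiffOn_log (n := (⊤:ℕ∞)).comp (hdsm.mono hUV)
      (fun x hx => ne_of_gt (hx.2 : (0:ℝ) < ε * d x))
    exact this
  have htopadd : ((⊤:ℕ∞) : WithTop ℕ∞) + 1 ≤ ((⊤:ℕ∞) : WithTop ℕ∞) := by
    exact_mod_cast le_of_eq (by simp)
  have hone : (1 : WithTop ℕ∞) ≤ ((⊤:ℕ∞) : WithTop ℕ∞) := by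
    exact_mod_cast le_top
  have hℓ'sm : ContDiffOn ℝ (⊤:ℕ∞) (deriv ℓr) U := hℓsm.deriv_of_isOpen hUopen htopadd
  have hlsm : ∀ x ∈ U, ContDiffAt ℝ (⊤:ℕ∞) lf x := fun x hx =>
    Complex.ofRealCLM.contDiff.contDiffAt.comp x
      (hℓ'sm.contDiffAt (hUopen.mem_nhds hx))
  have hLd : ∀ x ∈ U, HasDerivAt L (lf x) x := by
    intro x hx
    have h1 : DifferentiableAt ℝ ℓr x :=
      (hℓsm.contDiffAt (hUopen.mem_nhds hx)).differentiableAt (by simp)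
    exact (h1.hasDerivAt.ofReal_comp).add_const c
  -- support facts
  have hts : tsupport ψ ⊆ Icc 0 η := by
    refine (closure_mono hψs).trans ?_
    rw [closure_Ico hη.ne]
  have htsU : tsupport ψ ⊆ U := hts.trans hIccU
  have hψη : ∀ x, η ≤ x → ψ x = 0 := by
    intro x hx
    by_contra h
    exact absurd (hψs (Function.mem_support.2 h)).2 (not_lt.2 hx)
  -- PP and SS facts
  have hPP := PP_smooth_and_eventually_zero hUopen hlsm hψ htsU
  have hPc : ∀ k i, Continuous (PP lf ψ k i) := fun k i => (hPP k i).1.continuous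
  have hPη : ∀ k i x, η ≤ x → PP lf ψ k i x = 0 :=
    PP_zero_on_Ici (fun k i => (hPP k i).1) hψη
  have hPd : ∀ k i, Differentiable ℝ (PP lf ψ k i) := fun k i =>
    (hPP k i).1.differentiable (by simp)
  have hPz : ∀ x ∉ tsupport ψ, ∀ k i, PP lf ψ k i =ᶠ[nhds x] 0 := fun x hx k i =>
    (hPP k i).2 x hx
  have hSd : ∀ k z x, HasDerivAt (SS lf L ψ k z) (SS lf L ψ (k+1) z x) x :=
    hasDerivAt_SS hUopen htsU hLd hPd hPz
  have hSη : ∀ k z x, η ≤ x → SS lf L ψ k z x = 0 := by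
    intro k z x hx
    rw [SS]
    rw [Finset.sum_eq_zero fun i _ => by rw [hPη k i x hx, zero_mul], mul_zero]
  have hSc : ∀ k z, Continuous (SS lf L ψ k z) := by
    intro k z
    rw [continuous_iff_continuousAt]
    intro x
    by_cases hx : x ∈ U
    · have hLct : ContinuousAt L x := (hLd x hx).continuousAt
      exact (Complex.continuous_exp.continuousAt.comp (continuousAt_const.mul hLct)).mul
        (continuous_finset_sum _ fun i _ => (hPc k i).mul continuous_const).continuousAt
    · have hx' : x ∉ tsupport ψ := fun h => hx (htsU h)
      have hall : ∀ᶠ y in nhds x, ∀ i ∈ (Finset.range (k+1) : Set ℕ), PP lf ψ k i y = 0 :=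
        (Finset.range (k+1)).finite_toSet.eventually_all.2 fun i _ => hPz x hx' k i
      have hev : SS lf L ψ k z =ᶠ[nhds x] fun _ => (0:ℂ) := by
        filter_upwards [hall] with y hy
        rw [SS, Finset.sum_eq_zero fun i hi => by
          rw [hy i (Finset.mem_coe.2 hi), zero_mul], mul_zero]
      exact hev.continuousAt
  have hLcont : ContinuousOn L (Icc 0 η) := fun x hx =>
    ((hLd x (hIccU hx)).continuousAt).continuousWithinAt
  -- interface with F
  have hJ0 : ∀ z : ℂ, 0 < z.re → JJ a η lf L ψ 0 z = F z := by
    intro z hz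
    rw [hF z hz, JJ]
    apply setIntegral_congr_fun measurableSet_Ioo
    intro x hx
    dsimp only
    have hx0 : (0:ℝ) < x := hx.1
    have hxI : x ∈ Icc (0:ℝ) η := ⟨hx0.le, hx.2.le⟩
    have hL : Complex.log ((d x : ℝ) : ℂ) = L x := hLog x (hεd x hxI)
    have hdxne : ((d x : ℝ) : ℂ) ≠ 0 := ofReal_ne_zero.2 (hd0 x (hVI hxI))
    have hxcne : ((x:ℝ) : ℂ) ≠ 0 := ofReal_ne_zero.2 hx0.ne'
    rw [Complex.cpow_def_of_ne_zero hxcne, Complex.cpow_def_of_ne_zero hdxne,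
      ← Complex.ofReal_log hx0.le, hL]
    have hSS0 : SS lf L ψ 0 z x = Complex.exp (z * L x) * ψ x := by
      simp [SS, PP]
    rw [hSS0, Nat.cast_zero, add_zero, mul_comm z (L x)]
    ring
  -- the meromorphic continuation pieces
  have hstep : ∀ (k : ℕ) (z : ℂ), 0 < (a:ℝ) * z.re + (k:ℝ) →
      GkD a η lf L ψ (k+1) z = GkD a η lf L ψ k z := by
    intro k z hkz
    have hccre : (0:ℝ) < ((a:ℂ) * z + (k:ℂ) + 1).re := by
      have he : ((a:ℂ) * z + (k:ℂ) + 1).re = (a:ℝ) * z.re + k + 1 := by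
        simp [Complex.add_re, Complex.mul_re]
      rw [he]
      linarith
    have hccne : (a:ℂ) * z + (k:ℂ) + 1 ≠ 0 := by
      intro h; rw [h] at hccre; simp at hccre
    have hJ := JJ_step hη (fun k => hSc k z) (fun k x => hSd k z x) (fun k x => hSη k z x) hkz
    have hJ' : JJ a η lf L ψ (k+1) z
        = -(((a:ℂ) * z + (k:ℂ) + 1) * JJ a η lf L ψ k z) := by
      rw [hJ]
      field_simp
    rw [GkD, GkD, Finset.prod_Icc_succ_top (Nat.le_add_left 1 k), hJ',
      show ((a:ℂ) * z + ((k+1:ℕ):ℂ)) = (a:ℂ) * z + (k:ℂ) + 1 by push_cast; ring,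
      mul_inv, pow_succ]
    rw [show (-1:ℂ)^k * (-1) * ((∏ j ∈ Finset.Icc 1 k, ((a:ℂ) * z + (j:ℂ)))⁻¹
        * ((a:ℂ) * z + (k:ℂ) + 1)⁻¹) * -(((a:ℂ) * z + (k:ℂ) + 1) * JJ a η lf L ψ k z)
      = (((a:ℂ) * z + (k:ℂ) + 1)⁻¹ * ((a:ℂ) * z + (k:ℂ) + 1))
        * ((-1:ℂ)^k * (∏ j ∈ Finset.Icc 1 k, ((a:ℂ) * z + (j:ℂ)))⁻¹ * JJ a η lf L ψ k z)
      from by ring, inv_mul_cancel₀ hccne, one_mul]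
  have hchain : ∀ (n k : ℕ) (z : ℂ), 0 < (a:ℝ) * z.re + (k:ℝ) →
      GkD a η lf L ψ (k+n) z = GkD a η lf L ψ k z := by
    intro n
    induction n with
    | zero => intro k z _; rfl
    | succ n ih =>
      intro k z hkz
      have h1 : 0 < (a:ℝ) * z.re + (k+n:ℕ) := by
        push_cast
        push_cast at hkz
        have : (0:ℝ) ≤ n := Nat.cast_nonneg n
        linarith
      calc GkD a η lf L ψ (k + (n+1)) z = GkD a η lf L ψ ((k+n)+1) z := by
            rw [show k + (n+1) = (k+n)+1 by omega]
        _ = GkD a η lf L ψ (k+n) z := hstep (k+n) z h1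
        _ = GkD a η lf L ψ k z := ih k z hkz
  have hPN : ∀ z : ℂ, 0 < (a:ℝ) * z.re + (NN a z : ℝ) := by
    intro z
    have h1 : -‖z‖ ≤ z.re := by
      have := Complex.abs_re_le_norm z
      rw [abs_le] at this
      exact this.1
    have h2 : ‖z‖ ≤ (⌈‖z‖⌉₊ : ℝ) := Nat.le_ceil _
    have ha1 : (1:ℝ) ≤ a := by exact_mod_cast ha
    have : ((NN a z : ℕ) : ℝ) = (a:ℝ) * ((⌈‖z‖⌉₊ : ℝ) + 1) := by
      rw [NN]; push_cast; ring
    rw [this]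
    nlinarith
  set G : ℂ → ℂ := fun z => GkD a η lf L ψ (NN a z) z with hG
  have hGloc : ∀ z₀ z : ℂ, ‖z - z₀‖ < 1 → G z = GkD a η lf L ψ (a * (⌈‖z₀‖⌉₊ + 2)) z := by
    intro z₀ z hz1
    have hle : NN a z ≤ a * (⌈‖z₀‖⌉₊ + 2) := by
      have h1 : ‖z‖ ≤ ‖z₀‖ + 1 := by
        calc ‖z‖ = ‖z₀ + (z - z₀)‖ := by ring_nf
          _ ≤ ‖z₀‖ + ‖z - z₀‖ := norm_add_le _ _
          _ ≤ ‖z₀‖ + 1 := by linarith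
      have h2 : ⌈‖z‖⌉₊ ≤ ⌈‖z₀‖⌉₊ + 1 := by
        apply Nat.ceil_le.2
        push_cast
        calc ‖z‖ ≤ ‖z₀‖ + 1 := h1
          _ ≤ (⌈‖z₀‖⌉₊:ℝ) + 1 := by linarith [Nat.le_ceil ‖z₀‖]
      rw [NN]
      exact Nat.mul_le_mul_left a (by omega)
    obtain ⟨n, hn⟩ : ∃ n, a * (⌈‖z₀‖⌉₊ + 2) = NN a z + n :=
      ⟨_, (Nat.add_sub_cancel' hle).symm⟩
    show GkD a η lf L ψ (NN a z) z = _
    rw [hn]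
    exact (hchain n (NN a z) z (hPN z)).symm
  refine ⟨G, ?_, ?_, ?_⟩
  · -- agreement with F
    intro z hz
    have h0 : 0 < (a:ℝ) * z.re + ((0:ℕ):ℝ) := by
      push_cast
      nlinarith
    have hGz : G z = GkD a η lf L ψ 0 z := by
      show GkD a η lf L ψ (NN a z) z = _
      rw [show NN a z = 0 + NN a z from (zero_add _).symm]
      exact hchain (NN a z) 0 z h0
    rw [hGz, GkD]
    rw [show Finset.Icc (1:ℕ) 0 = (∅ : Finset ℕ) from rfl]
    simp only [pow_zero, Finset.prod_empty, inv_one, one_mul]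
    exact hJ0 z hz
  · -- differentiability away from poles
    intro z₀ hz₀
    simp only [mem_setOf_eq] at hz₀
    set K := a * (⌈‖z₀‖⌉₊ + 2) with hK
    have hev : G =ᶠ[nhds z₀] GkD a η lf L ψ K := by
      filter_upwards [Metric.ball_mem_nhds z₀ one_pos] with z hzb
      exact hGloc z₀ z (by rw [← dist_eq_norm]; exact hzb)
    have hNK : NN a z₀ ≤ K := by
      rw [NN, hK]
      exact Nat.mul_le_mul_left a (by omega)
    have hKpos : 0 < (a:ℝ) * z₀.re + (K:ℝ) := by
      have := hPN z₀
      have h2 : ((NN a z₀ : ℕ):ℝ) ≤ (K:ℝ) := by exact_mod_cast hNK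
      linarith
    have hprodne : (∏ j ∈ Finset.Icc 1 K, ((a:ℂ) * z₀ + (j:ℂ))) ≠ 0 := by
      rw [Finset.prod_ne_zero_iff]
      intro j hj h0
      have hj1 : 1 ≤ j := (Finset.mem_Icc.1 hj).1
      refine hz₀ j hj1 ?_
      field_simp
      linear_combination h0
    have hJd : DifferentiableAt ℂ (JJ a η lf L ψ K) z₀ :=
      JJ_diff hη (fun z => hSc K z) hLcont (fun i => hPc K i) hKpos
    have h1 : DifferentiableAt ℂ (fun z => ∏ j ∈ Finset.Icc 1 K, ((a:ℂ) * z + (j:ℂ))) z₀ :=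
      DifferentiableAt.fun_finsetProd fun j _ => (differentiableAt_fun_id.const_mul _).add_const _
    have hGkd : DifferentiableAt ℂ (GkD a η lf L ψ K) z₀ := by
      have := ((differentiableAt_const ((-1:ℂ)^K)).mul (h1.inv hprodne)).mul hJd
      exact this.congr_of_eventuallyEq (Eventually.of_forall fun z => by rw [GkD]; rfl)
    exact (hGkd.congr_of_eventuallyEq hev).differentiableWithinAt
  · -- simple poles
    intro m hm
    set w : ℂ := -((m:ℂ)/(a:ℂ)) with hw
    have hwr : w = ((-( (m:ℝ)/(a:ℝ) ) : ℝ) : ℂ) := by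
      rw [hw]; push_cast; ring
    have hwre : (a:ℝ) * w.re = -(m:ℝ) := by
      rw [hwr, Complex.ofReal_re]
      field_simp
    have hnw : ‖w‖ = (m:ℝ)/(a:ℝ) := by
      rw [hwr, Complex.norm_real, Real.norm_eq_abs, abs_neg]
      exact abs_of_nonneg (by positivity)
    set K := a * (⌈‖w‖⌉₊ + 2) with hK
    have hmaK : (m:ℝ) ≤ (a:ℝ) * (⌈‖w‖⌉₊ : ℝ) := by
      have h1 : (m:ℝ)/(a:ℝ) ≤ (⌈‖w‖⌉₊ : ℝ) := by
        rw [← hnw]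
        exact Nat.le_ceil _
      exact (div_le_iff₀' haR).1 h1
    have ha1 : (1:ℝ) ≤ a := by exact_mod_cast ha
    have hKR : ((K:ℕ):ℝ) = (a:ℝ) * ((⌈‖w‖⌉₊:ℝ) + 2) := by rw [hK]; push_cast; ring
    have hKm : (m:ℝ) + 1 ≤ (K:ℝ) := by rw [hKR]; nlinarith
    have hKpos : 0 < (a:ℝ) * w.re + (K:ℝ) := by rw [hwre]; linarith
    have hmK : m ≤ K := by exact_mod_cast (by linarith : (m:ℝ) ≤ (K:ℝ))
    have hmIcc : m ∈ Finset.Icc 1 K := Finset.mem_Icc.2 ⟨hm, hmK⟩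
    have haw : (a:ℂ) * w = -(m:ℂ) := by rw [hw]; field_simp
    refine ⟨fun z => (-1:ℂ)^K
      * ((a:ℂ) * ∏ j ∈ (Finset.Icc 1 K).erase m, ((a:ℂ) * z + (j:ℂ)))⁻¹
      * JJ a η lf L ψ K z, ?_, ?_⟩
    · -- analytic at w
      set S0 : Set ℂ := {z | 0 < (a:ℝ) * z.re + K}
        ∩ {z | (a:ℂ) * ∏ j ∈ (Finset.Icc 1 K).erase m, ((a:ℂ) * z + (j:ℂ)) ≠ 0} with hS0
      have hgc : Continuous (fun z : ℂ =>
          (a:ℂ) * ∏ j ∈ (Finset.Icc 1 K).erase m, ((a:ℂ) * z + (j:ℂ))) :=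
        continuous_const.mul (continuous_finset_prod _ fun j _ =>
          (continuous_const.mul continuous_id).add continuous_const)
      have hopen : IsOpen S0 := by
        refine IsOpen.inter ?_ ?_
        · exact isOpen_lt continuous_const
            ((continuous_const.mul (Complex.continuous_re)).add continuous_const)
        · exact (isClosed_eq hgc continuous_const).isOpen_compl
      have hwS0 : w ∈ S0 := by
        refine ⟨hKpos, ?_⟩
        simp only [mem_setOf_eq]
        refine mul_ne_zero haC ?_
        rw [Finset.prod_ne_zero_iff]
        intro j hj h0
        have hjm : j ≠ m := (Finset.mem_erase.1 hj).1
        rw [haw] at h0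
        have : (j:ℂ) = (m:ℂ) := by linear_combination h0
        exact hjm (Nat.cast_injective this)
      have hdiff : DifferentiableOn ℂ (fun z => (-1:ℂ)^K
          * ((a:ℂ) * ∏ j ∈ (Finset.Icc 1 K).erase m, ((a:ℂ) * z + (j:ℂ)))⁻¹
          * JJ a η lf L ψ K z) S0 := by
        intro z hz
        have h1 : DifferentiableAt ℂ (fun z =>
            (a:ℂ) * ∏ j ∈ (Finset.Icc 1 K).erase m, ((a:ℂ) * z + (j:ℂ))) z :=
          (differentiableAt_const _).mul (DifferentiableAt.fun_finsetProd fun j _ =>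
            (differentiableAt_fun_id.const_mul _).add_const _)
        exact (((differentiableAt_const _).mul (h1.inv hz.2)).mul
          (JJ_diff hη (fun z => hSc K z) hLcont (fun i => hPc K i) hz.1)).differentiableWithinAt
      exact hdiff.analyticAt (hopen.mem_nhds hwS0)
    · -- eventual equality
      have hball : Metric.ball w 1 ∈ nhdsWithin w {w}ᶜ :=
        mem_nhdsWithin_of_mem_nhds (Metric.ball_mem_nhds w one_pos)
      filter_upwards [hball, self_mem_nhdsWithin] with z hzb hzw
      have hzw' : z - w ≠ 0 := sub_ne_zero.2 hzw
      have hGz : G z = GkD a η lf L ψ K z :=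
        hGloc w z (by rw [← dist_eq_norm]; exact Metric.mem_ball.1 hzb)
      rw [pow_one, hGz, GkD]
      rw [← Finset.mul_prod_erase _ _ hmIcc]
      have hfac : (a:ℂ) * z + (m:ℂ) = (a:ℂ) * (z - w) := by
        rw [hw]; field_simp; ring
      rw [hfac]
      set P : ℂ := ∏ j ∈ (Finset.Icc 1 K).erase m, ((a:ℂ) * z + (j:ℂ)) with hP
      rw [show ((a:ℂ) * (z - w) * P)⁻¹ = (z - w)⁻¹ * ((a:ℂ) * P)⁻¹ from by
        rw [show (a:ℂ) * (z - w) * P = (z - w) * ((a:ℂ) * P) from by ring, mul_inv]]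
      rw [show (z - w) * ((-1:ℂ)^K * ((z - w)⁻¹ * ((a:ℂ) * P)⁻¹) * JJ a η lf L ψ K z)
        = ((z - w) * (z - w)⁻¹) * ((-1:ℂ)^K * ((a:ℂ) * P)⁻¹ * JJ a η lf L ψ K z) from by ring]
      rw [mul_inv_cancel₀ hzw', one_mul]
end
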